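/- Define the kernel K : ℝ → ℝ → ℂ by K q q' = ((q + q') * Real.sign (q − q') − (q^2 − q'^2)) / (4 * Complex.I). Let φ : ℝ → ℂ be twice continuously differentiable and satisfy φ (−1) = 0, φ 1 = 0, deriv φ (−1) = 0, deriv φ 1 = 0, ∫ q' in (-1:ℝ)..1, φ q' = 0, and ∫ q' in (-1:ℝ)..1, (q' : ℂ) * φ q' = 0. Define (T ψ) q = ∫ q' in (-1:ℝ)..1, K q q' * ψ q' and (H ψ) q = −(1/2) * deriv (deriv ψ) q. Then for every q in the open interval (−1, 1), (T (H φ)) q − (H (T φ)) q = −Complex.I * φ q. (The quantized time-of-arrival operator T for a particle confined in the box [−1,1] and the kinetic Hamiltonian H = −½ d²/dq² satisfy the canonical commutation relation, with commutator −i in the order TH − HT, on the subspace of functions with vanishing boundary values, vanishing boundary derivatives, and vanishing zeroth and first moments.) -/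

import Mathlib

/-- The kernel of the quantized time-of-arrival operator for the box `[-1,1]`. -/
noncomputable def Kker (q q' : ℝ) : ℂ :=
  (((q + q') * Real.sign (q - q') - (q ^ 2 - q' ^ 2) : ℝ) : ℂ) / (4 * Complex.I)

/-- The time-of-arrival integral operator. -/
noncomputable def Tarr (ψ : ℝ → ℂ) (q : ℝ) : ℂ :=
  ∫ q' in (-1:ℝ)..1, Kker q q' * ψ q'

/-- The kinetic Hamiltonian `H = -½ d²/dq²`. -/
noncomputable def Hop (ψ : ℝ → ℂ) (q : ℝ) : ℂ :=
  -(1 / 2) * deriv (deriv ψ) q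

/-!
Splitting the kernel at `x = q`, `4i · T ψ (q)` is `q (2∫₋₁^q ψ - ∫₋₁¹ ψ) + (2∫₋₁^q xψ - ∫₋₁¹ xψ)`
plus the second moment of `ψ` minus `q²` times its zeroth moment. For `ψ = φ''` integration by
parts and the boundary conditions give `4i · T φ'' (q) = 4qφ'(q) - 2φ(q)`. For `φ` itself the
vanishing moments leave `2q∫₋₁^q φ + 2∫₋₁^q xφ + const`, whose second derivative is
`(6φ + 4qφ')/(4i)`. In `T H φ - H T φ` the `qφ'` terms cancel, leaving `4φ/(4i) = -iφ`.
-/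

open MeasureTheory (volume)
open Set Filter Complex intervalIntegral

section SignKernel

variable {E : Type*} [NormedAddCommGroup E] [NormedSpace ℝ E] {f : ℝ → E} {a b q : ℝ}

lemma eqOn_sign_sub_smul_left (haq : a ≤ q) :
    EqOn (fun x => Real.sign (q - x) • f x) f (uIoo a q) := fun x hx => by
  rw [uIoo_of_le haq] at hx
  simp [Real.sign_of_pos (sub_pos.2 hx.2)]

lemma eqOn_sign_sub_smul_right (hqb : q ≤ b) :
    EqOn (fun x => Real.sign (q - x) • f x) (-f) (uIoo q b) := fun x hx => by
  rw [uIoo_of_le hqb] at hx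
  simp [Real.sign_of_neg (sub_neg.2 hx.1)]

lemma IntervalIntegrable.sign_sub_smul (hf : IntervalIntegrable f volume a b)
    (hq : q ∈ Icc a b) : IntervalIntegrable (fun x => Real.sign (q - x) • f x) volume a b :=
  ((hf.mono_set (uIcc_subset_uIcc_left (Icc_subset_uIcc hq))).congr_uIoo
    (eqOn_sign_sub_smul_left hq.1).symm).trans
    ((hf.mono_set (uIcc_subset_uIcc_right (Icc_subset_uIcc hq))).neg.congr_uIoo
      (eqOn_sign_sub_smul_right hq.2).symm)

lemma integral_sign_sub_smul (hf : IntervalIntegrable f volume a b) (hq : q ∈ Icc a b) :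
    ∫ x in a..b, Real.sign (q - x) • f x = (∫ x in a..q, f x) - ∫ x in q..b, f x := by
  have hfq := hf.mono_set (uIcc_subset_uIcc_left (Icc_subset_uIcc hq))
  have hqf := hf.mono_set (uIcc_subset_uIcc_right (Icc_subset_uIcc hq))
  rw [← integral_add_adjacent_intervals (hfq.congr_uIoo (eqOn_sign_sub_smul_left hq.1).symm)
      (hqf.neg.congr_uIoo (eqOn_sign_sub_smul_right hq.2).symm),
    integral_congr_uIoo (eqOn_sign_sub_smul_left hq.1),
    integral_congr_uIoo (eqOn_sign_sub_smul_right hq.2), Pi.neg_def, integral_neg, sub_eq_add_neg]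

end SignKernel

lemma Kker_mul (q x : ℝ) (z : ℂ) :
    Kker q x * z = (q * (Real.sign (q - x) • z) + Real.sign (q - x) • ((x : ℂ) * z)
      + (x : ℂ) ^ 2 * z - (q : ℂ) ^ 2 * z) / (4 * I) := by
  simp only [Kker, Complex.real_smul]
  push_cast
  ring

lemma Tarr_eq_of_mem_Icc {ψ : ℝ → ℂ} (hψ : Continuous ψ) {q : ℝ} (hq : q ∈ Icc (-1) 1) :
    Tarr ψ q = (q * (2 * (∫ x in (-1:ℝ)..q, ψ x) - ∫ x in (-1:ℝ)..1, ψ x)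
      + (2 * (∫ x in (-1:ℝ)..q, (x : ℂ) * ψ x) - ∫ x in (-1:ℝ)..1, (x : ℂ) * ψ x)
      + (∫ x in (-1:ℝ)..1, (x : ℂ) ^ 2 * ψ x) - q ^ 2 * ∫ x in (-1:ℝ)..1, ψ x) / (4 * I) := by
  have h0 : ∀ a b : ℝ, IntervalIntegrable ψ volume a b := hψ.intervalIntegrable
  have h1 : ∀ a b : ℝ, IntervalIntegrable (fun x : ℝ => (x : ℂ) * ψ x) volume a b :=
    (by fun_prop : Continuous fun x : ℝ => (x : ℂ) * ψ x).intervalIntegrable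
  have h2 : ∀ a b : ℝ, IntervalIntegrable (fun x : ℝ => (x : ℂ) ^ 2 * ψ x) volume a b :=
    (by fun_prop : Continuous fun x : ℝ => (x : ℂ) ^ 2 * ψ x).intervalIntegrable
  have hs0 := (h0 (-1) 1).sign_sub_smul hq
  have hs1 := (h1 (-1) 1).sign_sub_smul hq
  simp only [Tarr, Kker_mul]
  rw [integral_div, integral_sub, integral_add, integral_add, integral_const_mul,
    integral_const_mul, integral_sign_sub_smul (h0 _ _) hq, integral_sign_sub_smul (h1 _ _) hq,
    ← integral_interval_sub_left (h0 (-1) 1) (h0 (-1) q),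
    ← integral_interval_sub_left (h1 (-1) 1) (h1 (-1) q)]
  · ring
  exacts [hs0.const_mul _, hs1, (hs0.const_mul _).add hs1, h2 _ _,
    ((hs0.const_mul _).add hs1).add (h2 _ _), (h0 _ _).const_mul _]

lemma Tarr_Hop (ψ : ℝ → ℂ) (q : ℝ) : Tarr (Hop ψ) q = -(1 / 2) * Tarr (deriv (deriv ψ)) q := by
  simp only [Tarr, Hop, mul_left_comm _ (-(1 / 2) : ℂ), integral_const_mul]

lemma integral_ofReal_mul_deriv {f : ℝ → ℂ} (hf : ContDiff ℝ 1 f) (a b : ℝ) :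
    ∫ x in a..b, (x : ℂ) * deriv f x = b * f b - a * f a - ∫ x in a..b, f x := by
  have h := integral_mul_deriv_eq_deriv_mul (u := fun x : ℝ => (x : ℂ)) (u' := fun _ => 1)
    (a := a) (b := b) (fun x _ => (hasDerivAt_id x).ofReal_comp)
    (fun x _ => (hf.differentiable one_ne_zero x).hasDerivAt)
    intervalIntegrable_const ((hf.continuous_deriv le_rfl).intervalIntegrable _ _)
  simpa only [one_mul] using h

lemma integral_ofReal_sq_mul_deriv {f : ℝ → ℂ} (hf : ContDiff ℝ 1 f) (a b : ℝ) :
    ∫ x in a..b, (x : ℂ) ^ 2 * deriv f x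
      = b ^ 2 * f b - a ^ 2 * f a - 2 * ∫ x in a..b, (x : ℂ) * f x := by
  have h := integral_mul_deriv_eq_deriv_mul (u := fun x : ℝ => (x : ℂ) ^ 2)
    (u' := fun x => 2 * (x : ℂ)) (a := a) (b := b)
    (fun x _ => by simpa using ((hasDerivAt_id x).ofReal_comp).fun_pow 2)
    (fun x _ => (hf.differentiable one_ne_zero x).hasDerivAt)
    ((by fun_prop : Continuous fun x : ℝ => 2 * (x : ℂ)).intervalIntegrable _ _)
    ((hf.continuous_deriv le_rfl).intervalIntegrable _ _)
  simpa only [mul_assoc, integral_const_mul] using h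

lemma Tarr_deriv_deriv {φ : ℝ → ℂ} (hφ : ContDiff ℝ 2 φ)
    (hb1 : φ (-1) = 0) (hb2 : φ 1 = 0) (hb3 : deriv φ (-1) = 0) (hb4 : deriv φ 1 = 0)
    (hm0 : ∫ x in (-1:ℝ)..1, φ x = 0) {q : ℝ} (hq : q ∈ Icc (-1) 1) :
    Tarr (deriv (deriv φ)) q = (4 * q * deriv φ q - 2 * φ q) / (4 * I) := by
  have hφ' : ContDiff ℝ 1 (deriv φ) := hφ.deriv'
  have hφ1 : ContDiff ℝ 1 φ := hφ.of_le one_le_two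
  have hftc : ∀ {g : ℝ → ℂ}, ContDiff ℝ 1 g → ∀ b, ∫ x in (-1:ℝ)..b, deriv g x = g b - g (-1) :=
    fun hg b => integral_deriv_eq_sub (fun x _ => hg.differentiable one_ne_zero x)
      ((hg.continuous_deriv le_rfl).intervalIntegrable _ _)
  rw [Tarr_eq_of_mem_Icc (hφ'.continuous_deriv le_rfl) hq, hftc hφ', hftc hφ',
    integral_ofReal_mul_deriv hφ', integral_ofReal_mul_deriv hφ', integral_ofReal_sq_mul_deriv hφ',
    integral_ofReal_mul_deriv hφ1, hftc hφ1, hftc hφ1, hm0, hb1, hb2, hb3, hb4]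
  push_cast
  ring

section VanishingMoments

variable {φ : ℝ → ℂ} (hm0 : ∫ x in (-1:ℝ)..1, φ x = 0)
  (hm1 : ∫ x in (-1:ℝ)..1, (x : ℂ) * φ x = 0)
include hm0 hm1

lemma eqOn_Tarr_of_moments_eq_zero (hφ : Continuous φ) :
    EqOn (Tarr φ) (fun s => (2 * s * (∫ x in (-1:ℝ)..s, φ x)
      + 2 * (∫ x in (-1:ℝ)..s, (x : ℂ) * φ x) + ∫ x in (-1:ℝ)..1, (x : ℂ) ^ 2 * φ x) / (4 * I))
      (Icc (-1) 1) := fun s hs => by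
  rw [Tarr_eq_of_mem_Icc hφ hs, hm0, hm1]
  ring

lemma deriv_Tarr_of_moments_eq_zero (hφ : Continuous φ) {q : ℝ} (hq : q ∈ Ioo (-1) 1) :
    deriv (Tarr φ) q = (2 * (∫ x in (-1:ℝ)..q, φ x) + 4 * q * φ q) / (4 * I) := by
  have hA := (hφ.integral_hasStrictDerivAt (-1) q).hasDerivAt
  have hB := ((by fun_prop : Continuous fun x : ℝ => (x : ℂ) * φ x).integral_hasStrictDerivAt
    (-1) q).hasDerivAt
  have h := (((((hasDerivAt_id q).ofReal_comp.const_mul 2).mul hA).add (hB.const_mul 2)).add_const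
    (∫ x in (-1:ℝ)..1, (x : ℂ) ^ 2 * φ x)).div_const (4 * I)
  rw [((eqOn_Tarr_of_moments_eq_zero hm0 hm1 hφ).eventuallyEq_of_mem
    (Icc_mem_nhds hq.1 hq.2)).deriv_eq]
  exact h.deriv.trans (by simp only [id, ofReal_one]; ring)

lemma deriv_deriv_Tarr_of_moments_eq_zero (hφ : Differentiable ℝ φ) {q : ℝ}
    (hq : q ∈ Ioo (-1) 1) :
    deriv (deriv (Tarr φ)) q = (6 * φ q + 4 * q * deriv φ q) / (4 * I) := by
  have hA := (hφ.continuous.integral_hasStrictDerivAt (-1) q).hasDerivAt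
  have h := ((hA.const_mul 2).add ((((hasDerivAt_id q).ofReal_comp.const_mul 4).mul
    (hφ q).hasDerivAt))).div_const (4 * I)
  have hEq : EqOn (deriv (Tarr φ)) _ (Ioo (-1) 1) :=
    fun s hs => deriv_Tarr_of_moments_eq_zero hm0 hm1 hφ.continuous hs
  rw [(hEq.eventuallyEq_of_mem (isOpen_Ioo.mem_nhds hq)).deriv_eq]
  exact h.deriv.trans (by simp only [id, ofReal_one]; ring)

end VanishingMoments

theorem time_of_arrival_canonical_commutation
    (φ : ℝ → ℂ) (hφ : ContDiff ℝ 2 φ)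
    (hb1 : φ (-1) = 0) (hb2 : φ 1 = 0)
    (hb3 : deriv φ (-1) = 0) (hb4 : deriv φ 1 = 0)
    (hm0 : (∫ q' in (-1:ℝ)..1, φ q') = 0)
    (hm1 : (∫ q' in (-1:ℝ)..1, (q' : ℂ) * φ q') = 0) :
    ∀ q ∈ Set.Ioo (-1 : ℝ) 1,
      Tarr (Hop φ) q - Hop (Tarr φ) q = -Complex.I * φ q := by
  intro q hq
  rw [Tarr_Hop, Tarr_deriv_deriv hφ hb1 hb2 hb3 hb4 hm0 (Ioo_subset_Icc_self hq), Hop,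
    deriv_deriv_Tarr_of_moments_eq_zero hm0 hm1 (hφ.differentiable two_ne_zero) hq]
  simp only [div_eq_mul_inv, mul_inv, inv_I]
  ring
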